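/- Misclassification probability for the nearest-hypothesis rule (core of the clustering Lemma): Let n be a positive integer, S > 0, μ, a, b ∈ ℝⁿ with ‖b − μ‖₂ ≤ S/100 and ‖a − μ‖₂ ≥ S/20, and let X be distributed as N(μ, I) on ℝⁿ. Then Pr[ ‖X − a‖₂ ≤ ‖X − b‖₂ ] ≤ exp(−S²/20000). -/

import Mathlib

open MeasureTheory

/-- The Gaussian measure `N(μ, I)` on `ℝⁿ`, given by its density with respect to
Lebesgue measure. -/
noncomputable def stdGaussian (n : ℕ) (μ : EuclideanSpace ℝ (Fin n)) :
    Measure (EuclideanSpace ℝ (Fin n)) :=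
  volume.withDensity fun x =>
    ENNReal.ofReal ((2 * Real.pi) ^ (-(n : ℝ) / 2) * Real.exp (-‖x - μ‖ ^ 2 / 2))

/-!
The event `‖X - a‖ ≤ ‖X - b‖` is a half-space `{x | c ≤ ⟪x - μ, e⟫}` with `e` the unit vector
along `a - b` and `c ≥ (‖a - μ‖ - ‖b - μ‖) / 2 ≥ S / 50`. On that half-space the density of
`N(μ, I)` is at most `exp (-c² / 2)` times the density of `N(μ + c e, I)`, so the half-space has
probability at most `exp (-c² / 2) ≤ exp (-S² / 5000)`.
-/

open Real
open scoped ENNReal RealInnerProductSpace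

section InnerProductSpace

variable {E : Type*} [NormedAddCommGroup E] [InnerProductSpace ℝ E]

lemma norm_sub_smul_sq_add_sq_le_norm_sq {g e : E} {c : ℝ} (he : ‖e‖ = 1) (hc : 0 ≤ c)
    (hge : c ≤ ⟪g, e⟫) : ‖g - c • e‖ ^ 2 + c ^ 2 ≤ ‖g‖ ^ 2 := by
  rw [norm_sub_sq_real, real_inner_smul_right, norm_smul, mul_pow, he, Real.norm_eq_abs, sq_abs]
  nlinarith

lemma sub_div_two_le_inner_of_norm_sub_le {x y a b : E} (hba : ‖b - y‖ ≤ ‖a - y‖)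
    (h : ‖x - a‖ ≤ ‖x - b‖) : (‖a - y‖ - ‖b - y‖) / 2 ≤ ⟪x - y, ‖a - b‖⁻¹ • (a - b)⟫ := by
  set u := a - y
  set w := b - y
  set g := x - y
  have hab : a - b = u - w := by simp only [u, w, sub_sub_sub_cancel_right]
  have hsq : ‖g - u‖ ^ 2 ≤ ‖g - w‖ ^ 2 := by
    simpa only [g, u, w, sub_sub_sub_cancel_right] using pow_le_pow_left₀ (norm_nonneg _) h 2
  have hinner : ‖u‖ ^ 2 - ‖w‖ ^ 2 ≤ 2 * ⟪g, u - w⟫ := by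
    rw [norm_sub_sq_real (x := g), norm_sub_sq_real (x := g)] at hsq
    rw [inner_sub_right]
    linarith
  have huw : (‖u‖ - ‖w‖) * ‖u - w‖ ≤ 2 * ⟪g, u - w⟫ := by
    nlinarith [norm_sub_le u w]
  rw [hab, real_inner_smul_right]
  rcases (norm_nonneg (u - w)).eq_or_lt with h0 | hpos
  · rw [← h0, inv_zero, zero_mul]
    linarith [norm_sub_norm_le u w]
  · rw [le_inv_mul_iff₀ hpos]
    linarith

end InnerProductSpace

noncomputable def stdGaussianPDF (n : ℕ) (μ x : EuclideanSpace ℝ (Fin n)) : ℝ≥0∞ :=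
  ENNReal.ofReal ((2 * π) ^ (-(n : ℝ) / 2) * exp (-‖x - μ‖ ^ 2 / 2))

lemma stdGaussian_eq_withDensity (n : ℕ) (μ : EuclideanSpace ℝ (Fin n)) :
    stdGaussian n μ = volume.withDensity (stdGaussianPDF n μ) :=
  rfl

@[fun_prop]
lemma measurable_stdGaussianPDF (n : ℕ) (μ : EuclideanSpace ℝ (Fin n)) :
    Measurable (stdGaussianPDF n μ) :=
  Measurable.ennreal_ofReal (by fun_prop)

lemma integral_exp_neg_norm_sq_div_two (V : Type*) [NormedAddCommGroup V]
    [InnerProductSpace ℝ V] [FiniteDimensional ℝ V] [MeasurableSpace V] [BorelSpace V] :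
    ∫ v : V, exp (-‖v‖ ^ 2 / 2) = (2 * π) ^ (Module.finrank ℝ V / 2 : ℝ) := by
  convert GaussianFourier.integral_rexp_neg_mul_sq_norm (V := V) (b := 1 / 2) (by norm_num)
    using 3 with v
  · ring_nf
  · field_simp

instance isProbabilityMeasure_stdGaussian (n : ℕ) (μ : EuclideanSpace ℝ (Fin n)) :
    IsProbabilityMeasure (stdGaussian n μ) := by
  constructor
  have hint : ∫ x : EuclideanSpace ℝ (Fin n), exp (-‖x‖ ^ 2 / 2) = (2 * π) ^ ((n : ℝ) / 2) := by
    rw [integral_exp_neg_norm_sq_div_two, finrank_euclideanSpace_fin]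
  have hintegrable : Integrable fun x : EuclideanSpace ℝ (Fin n) =>
      (2 * π) ^ (-(n : ℝ) / 2) * exp (-‖x‖ ^ 2 / 2) :=
    (Integrable.of_integral_ne_zero (by rw [hint]; positivity)).const_mul _
  simp only [stdGaussian_eq_withDensity, withDensity_apply _ MeasurableSet.univ,
    Measure.restrict_univ, stdGaussianPDF]
  rw [lintegral_sub_right_eq_self
      (fun x => ENNReal.ofReal ((2 * π) ^ (-(n : ℝ) / 2) * exp (-‖x‖ ^ 2 / 2))) μ,
    ← ofReal_integral_eq_lintegral_ofReal hintegrable (ae_of_all _ fun _ => by positivity),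
    integral_const_mul, hint, ← rpow_add (by positivity), neg_div, neg_add_cancel, rpow_zero,
    ENNReal.ofReal_one]

lemma stdGaussianPDF_le_of_le_inner (n : ℕ) {μ e x : EuclideanSpace ℝ (Fin n)} (he : ‖e‖ = 1)
    {c : ℝ} (hc : 0 ≤ c) (hx : c ≤ ⟪x - μ, e⟫) :
    stdGaussianPDF n μ x ≤ ENNReal.ofReal (exp (-c ^ 2 / 2)) * stdGaussianPDF n (μ + c • e) x := by
  have hsq := norm_sub_smul_sq_add_sq_le_norm_sq he hc hx
  rw [stdGaussianPDF, stdGaussianPDF, ← sub_sub, ← ENNReal.ofReal_mul (exp_pos _).le,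
    mul_left_comm, ← exp_add]
  gcongr
  linarith

theorem stdGaussian_setOf_le_inner_le (n : ℕ) (μ e : EuclideanSpace ℝ (Fin n)) (he : ‖e‖ = 1)
    {c : ℝ} (hc : 0 ≤ c) :
    stdGaussian n μ {x | c ≤ ⟪x - μ, e⟫} ≤ ENNReal.ofReal (exp (-c ^ 2 / 2)) := by
  set s := {x | c ≤ ⟪x - μ, e⟫}
  calc stdGaussian n μ s = ∫⁻ x in s, stdGaussianPDF n μ x := withDensity_apply' _ _
    _ ≤ ∫⁻ x in s, ENNReal.ofReal (exp (-c ^ 2 / 2)) * stdGaussianPDF n (μ + c • e) x :=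
        setLIntegral_mono (by fun_prop) fun x hx => stdGaussianPDF_le_of_le_inner n he hc hx
    _ = ENNReal.ofReal (exp (-c ^ 2 / 2)) * stdGaussian n (μ + c • e) s := by
        rw [lintegral_const_mul' _ _ ENNReal.ofReal_ne_top, stdGaussian_eq_withDensity,
          withDensity_apply']
    _ ≤ ENNReal.ofReal (exp (-c ^ 2 / 2)) := mul_le_of_le_one_right' prob_le_one

theorem stdGaussian_setOf_norm_sub_le_norm_sub_le (n : ℕ) {μ a b : EuclideanSpace ℝ (Fin n)}
    (hab : a ≠ b) (hba : ‖b - μ‖ ≤ ‖a - μ‖) :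
    stdGaussian n μ {x | ‖x - a‖ ≤ ‖x - b‖}
      ≤ ENNReal.ofReal (exp (-((‖a - μ‖ - ‖b - μ‖) / 2) ^ 2 / 2)) :=
  calc stdGaussian n μ {x | ‖x - a‖ ≤ ‖x - b‖}
      ≤ stdGaussian n μ {x | (‖a - μ‖ - ‖b - μ‖) / 2 ≤ ⟪x - μ, ‖a - b‖⁻¹ • (a - b)⟫} :=
        measure_mono fun _ hx => sub_div_two_le_inner_of_norm_sub_le hba hx
    _ ≤ _ := stdGaussian_setOf_le_inner_le n μ _ (norm_smul_inv_norm (sub_ne_zero.mpr hab))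
        (by linarith)

theorem stmt_12_general (n : ℕ) (S : ℝ) (hS : 0 < S)
    (μ a b : EuclideanSpace ℝ (Fin n))
    (hb : ‖b - μ‖ ≤ S / 100) (ha : S / 20 ≤ ‖a - μ‖) :
    stdGaussian n μ {x | ‖x - a‖ ≤ ‖x - b‖} ≤ ENNReal.ofReal (Real.exp (-S ^ 2 / 20000)) := by
  have hab : a ≠ b := by
    rintro rfl
    linarith
  have hgap : S / 50 ≤ (‖a - μ‖ - ‖b - μ‖) / 2 := by linarith
  refine (stdGaussian_setOf_norm_sub_le_norm_sub_le n hab (by linarith)).trans ?_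
  exact ENNReal.ofReal_le_ofReal (exp_le_exp.mpr (by nlinarith))

/-- Misclassification probability for the nearest-hypothesis rule: if `‖b - μ‖ ≤ S/100` and
`‖a - μ‖ ≥ S/20`, then for `X ~ N(μ, I)`, `Pr[‖X - a‖ ≤ ‖X - b‖] ≤ exp(-S²/20000)`. -/
theorem stmt_12 (n : ℕ) (hn : 0 < n) (S : ℝ) (hS : 0 < S)
    (μ a b : EuclideanSpace ℝ (Fin n))
    (hb : ‖b - μ‖ ≤ S / 100) (ha : S / 20 ≤ ‖a - μ‖) :
    stdGaussian n μ {x | ‖x - a‖ ≤ ‖x - b‖} ≤ ENNReal.ofReal (Real.exp (-S ^ 2 / 20000)) :=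
  stmt_12_general n S hS μ a b hb ha
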